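/- Let f̃ : ℝ^b → ℝ^b be an A-equivariant lift with A expanding with constant λ > 1 for the norm ‖·‖, and let β̃ be the Franks map. Then the following are equivalent: (a) β̃ is injective (equivalently, the induced semiconjugacy β : 𝕋^b → 𝕋^b is injective); (b) there exist a metric d̃ on ℝ^b inducing the standard topology, which is ℤ^b-equivariant (d̃(x̃ + n, ỹ + n) = d̃(x̃, ỹ) for all n ∈ ℤ^b), and a constant λ' > 1 such that d̃(f̃(x̃), f̃(ỹ)) ≥ λ' d̃(x̃, ỹ) for all x̃, ỹ; (c) whenever sup_{i∈ℕ} ‖f̃^i(x̃) − f̃^i(x̃')‖ < ∞ one has x̃ = x̃' (no two distinct points shadow under f̃). -/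

import Mathlib

open Matrix Filter

/-- The coercion of an integer vector to a real vector. -/
noncomputable def intVec {b : ℕ} (n : Fin b → ℤ) : Fin b → ℝ := fun i => (n i : ℝ)

/-- The integer lattice `ℤ^b` as an additive subgroup of `ℝ^b`. -/
def latticeZ (b : ℕ) : AddSubgroup (Fin b → ℝ) where
  carrier := Set.range (fun n : Fin b → ℤ => intVec n)
  add_mem' := by rintro _ _ ⟨m, rfl⟩ ⟨n, rfl⟩; exact ⟨m + n, by funext i; simp [intVec]⟩
  zero_mem' := ⟨0, by funext i; simp [intVec]⟩
  neg_mem' := by rintro _ ⟨n, rfl⟩; exact ⟨-n, by funext i; simp [intVec]⟩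

/-- The torus `𝕋^b = ℝ^b / ℤ^b`. -/
abbrev Torus (b : ℕ) := (Fin b → ℝ) ⧸ latticeZ b

/-- The projection `π : ℝ^b → 𝕋^b`. -/
noncomputable def projT (b : ℕ) : (Fin b → ℝ) →+ Torus b := QuotientAddGroup.mk' (latticeZ b)

/-- The real matrix associated to an integer matrix. -/
noncomputable def realMat {b : ℕ} (A : Matrix (Fin b) (Fin b) ℤ) : Matrix (Fin b) (Fin b) ℝ :=
  A.map (Int.cast)

/-! Since `f̃ - A` is `ℤ^b`-periodic it is bounded, so the approximants `A⁻ⁿ f̃ⁿ` converge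
geometrically fast and uniformly: the Franks map `β̃` is continuous, at bounded distance from the
identity, `ℤ^b`-equivariant, and `β̃ ∘ f̃ = A ∘ β̃`.

(a) → (b): an injective continuous map at bounded distance from the identity is proper, hence a
closed embedding, so `‖β̃ x - β̃ y‖` is a metric for the usual topology, and `f̃` expands it by `λ`
because `β̃ ∘ f̃ = A ∘ β̃`.

(b) → (c): by invariance and compactness of a fundamental domain, an equivariant metric inducing
the usual topology is bounded on pairs at bounded norm distance; for shadowing points the
`d`-distances of the orbits are then bounded, while they grow like `λ'ⁱ`.

(c) → (a): if `β̃ x = β̃ x'`, the orbits of `x` and `x'` have the same image under `β̃`, so they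
stay within twice the distance of `β̃` to the identity. -/

section Franks

variable {ι : Type*} [Fintype ι] [DecidableEq ι]

noncomputable def franksApprox (M : Matrix ι ι ℝ) (f : (ι → ℝ) → ι → ℝ) (n : ℕ) (x : ι → ℝ) :
    ι → ℝ :=
  (M⁻¹ ^ n) *ᵥ f^[n] x

def IsFranksMap (M : Matrix ι ι ℝ) (f β : (ι → ℝ) → ι → ℝ) : Prop :=
  ∀ x, Tendsto (fun n => franksApprox M f n x) atTop (nhds (β x))

variable {M : Matrix ι ι ℝ} {f β : (ι → ℝ) → ι → ℝ} {r C : ℝ}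

theorem norm_inv_pow_mulVec_le {lam : ℝ} (hM : IsUnit M.det) (hlam : 0 < lam)
    (hexp : ∀ v, lam * ‖v‖ ≤ ‖M *ᵥ v‖) (n : ℕ) (v : ι → ℝ) :
    ‖(M⁻¹ ^ n) *ᵥ v‖ ≤ lam⁻¹ ^ n * ‖v‖ := by
  induction n generalizing v with
  | zero => simp
  | succ n ih =>
    have hinv : ‖M⁻¹ *ᵥ v‖ ≤ lam⁻¹ * ‖v‖ := by
      have h := hexp (M⁻¹ *ᵥ v)
      rw [mulVec_mulVec, mul_nonsing_inv M hM, one_mulVec] at h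
      rwa [le_inv_mul_iff₀ hlam]
    calc ‖(M⁻¹ ^ (n + 1)) *ᵥ v‖ = ‖(M⁻¹ ^ n) *ᵥ (M⁻¹ *ᵥ v)‖ := by
          rw [pow_succ, mulVec_mulVec]
      _ ≤ lam⁻¹ ^ n * (lam⁻¹ * ‖v‖) := (ih _).trans (by gcongr)
      _ = lam⁻¹ ^ (n + 1) * ‖v‖ := by ring

theorem dist_franksApprox_succ_le (hM : IsUnit M.det) (hr₀ : 0 ≤ r)
    (hcontr : ∀ n v, ‖(M⁻¹ ^ n) *ᵥ v‖ ≤ r ^ n * ‖v‖) (hdisp : ∀ y, ‖f y - M *ᵥ y‖ ≤ C)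
    (n : ℕ) (x : ι → ℝ) :
    dist (franksApprox M f n x) (franksApprox M f (n + 1) x) ≤ C * r * r ^ n := by
  set y := f^[n] x
  have hy : franksApprox M f n x = (M⁻¹ ^ (n + 1)) *ᵥ (M *ᵥ y) := by
    rw [mulVec_mulVec, pow_succ, mul_assoc, nonsing_inv_mul M hM, mul_one]; rfl
  rw [dist_comm, dist_eq_norm, hy, franksApprox, Function.iterate_succ_apply', ← mulVec_sub]
  calc _ ≤ r ^ (n + 1) * ‖f y - M *ᵥ y‖ := hcontr _ _
    _ ≤ r ^ (n + 1) * C := mul_le_mul_of_nonneg_left (hdisp y) (pow_nonneg hr₀ _)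
    _ = C * r * r ^ n := by ring

theorem IsFranksMap.dist_franksApprox_le (hβ : IsFranksMap M f β) (hM : IsUnit M.det)
    (hr₀ : 0 ≤ r) (hr : r < 1) (hcontr : ∀ n v, ‖(M⁻¹ ^ n) *ᵥ v‖ ≤ r ^ n * ‖v‖)
    (hdisp : ∀ y, ‖f y - M *ᵥ y‖ ≤ C) (n : ℕ) (x : ι → ℝ) :
    dist (franksApprox M f n x) (β x) ≤ C * r * r ^ n / (1 - r) :=
  dist_le_of_le_geometric_of_tendsto _ _ hr (dist_franksApprox_succ_le hM hr₀ hcontr hdisp · x)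
    (hβ x) n

theorem IsFranksMap.dist_le (hβ : IsFranksMap M f β) (hM : IsUnit M.det) (hr₀ : 0 ≤ r)
    (hr : r < 1) (hcontr : ∀ n v, ‖(M⁻¹ ^ n) *ᵥ v‖ ≤ r ^ n * ‖v‖)
    (hdisp : ∀ y, ‖f y - M *ᵥ y‖ ≤ C) (x : ι → ℝ) : dist x (β x) ≤ C * r / (1 - r) := by
  simpa [franksApprox] using hβ.dist_franksApprox_le hM hr₀ hr hcontr hdisp 0 x

theorem IsFranksMap.continuous (hβ : IsFranksMap M f β) (hf : Continuous f) (hM : IsUnit M.det)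
    (hr₀ : 0 ≤ r) (hr : r < 1) (hcontr : ∀ n v, ‖(M⁻¹ ^ n) *ᵥ v‖ ≤ r ^ n * ‖v‖)
    (hdisp : ∀ y, ‖f y - M *ᵥ y‖ ≤ C) : Continuous β := by
  have hunif : TendstoUniformly (franksApprox M f) β atTop := by
    rw [Metric.tendstoUniformly_iff]
    intro ε hε
    have hlim : Tendsto (fun n : ℕ => C * r * r ^ n / (1 - r)) atTop (nhds 0) := by
      simpa using ((tendsto_pow_atTop_nhds_zero_of_lt_one hr₀ hr).const_mul (C * r)).div_const
        (1 - r)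
    filter_upwards [hlim.eventually (gt_mem_nhds hε)] with n hn x
    rw [dist_comm]
    exact (hβ.dist_franksApprox_le hM hr₀ hr hcontr hdisp n x).trans_lt hn
  refine hunif.continuous (Frequently.of_forall fun n => ?_)
  exact (M⁻¹ ^ n).mulVecLin.continuous_of_finiteDimensional.comp (hf.iterate n)

theorem IsFranksMap.semiconj (hβ : IsFranksMap M f β) (hM : IsUnit M.det) :
    Function.Semiconj β f (M *ᵥ ·) := by
  intro x
  refine tendsto_nhds_unique (hβ (f x)) ?_
  have hshift :
      (fun n => franksApprox M f n (f x)) = fun n => M *ᵥ franksApprox M f (n + 1) x := by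
    funext n
    rw [franksApprox, franksApprox, mulVec_mulVec, pow_succ', ← mul_assoc, mul_nonsing_inv M hM,
      one_mul, Function.iterate_succ_apply]
  rw [hshift]
  exact (M.mulVecLin.continuous_of_finiteDimensional.tendsto _).comp
    ((hβ x).comp (tendsto_add_atTop_nat 1))

end Franks

section Lattice

variable {b : ℕ}

theorem exists_add_intVec_mem_closedBall (x : Fin b → ℝ) :
    ∃ n : Fin b → ℤ, x + intVec n ∈ Metric.closedBall 0 1 := by
  refine ⟨fun i => -⌊x i⌋, ?_⟩
  rw [mem_closedBall_zero_iff, pi_norm_le_iff_of_nonneg zero_le_one]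
  intro i
  have hfract : (x + intVec fun i => -⌊x i⌋) i = Int.fract (x i) := by
    simp [intVec, Int.fract, sub_eq_add_neg]
  rw [hfract, Real.norm_of_nonneg (Int.fract_nonneg _)]
  exact (Int.fract_lt_one _).le

theorem exists_forall_norm_le_of_periodic {E : Type*} [SeminormedAddCommGroup E]
    {g : (Fin b → ℝ) → E} (hg : Continuous g) (hper : ∀ x n, g (x + intVec n) = g x) :
    ∃ C, ∀ x, ‖g x‖ ≤ C := by
  obtain ⟨C, hC⟩ := (isCompact_closedBall (0 : Fin b → ℝ) 1).exists_bound_of_continuousOn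
    hg.continuousOn
  refine ⟨C, fun x => ?_⟩
  obtain ⟨n, hn⟩ := exists_add_intVec_mem_closedBall x
  exact hper x n ▸ hC _ hn

theorem realMat_mulVec_intVec (A : Matrix (Fin b) (Fin b) ℤ) (n : Fin b → ℤ) :
    realMat A *ᵥ intVec n = intVec (A *ᵥ n) := by
  funext i
  simp [realMat, intVec, mulVec, dotProduct]

theorem realMat_pow (A : Matrix (Fin b) (Fin b) ℤ) (k : ℕ) : realMat (A ^ k) = realMat A ^ k :=
  map_pow (Int.castRingHom ℝ).mapMatrix A k

variable {A : Matrix (Fin b) (Fin b) ℤ} {f β : (Fin b → ℝ) → Fin b → ℝ}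

theorem iterate_add_intVec
    (hequiv : ∀ x n, f (x + intVec n) = f x + realMat A *ᵥ intVec n) (k : ℕ) (x : Fin b → ℝ)
    (n : Fin b → ℤ) : f^[k] (x + intVec n) = f^[k] x + realMat A ^ k *ᵥ intVec n := by
  induction k generalizing x n with
  | zero => simp
  | succ k ih =>
    rw [Function.iterate_succ_apply', ih, ← realMat_pow, realMat_mulVec_intVec, hequiv,
      ← realMat_mulVec_intVec, realMat_pow, mulVec_mulVec, ← pow_succ',
      Function.iterate_succ_apply']

theorem exists_forall_norm_sub_mulVec_le (hf : Continuous f)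
    (hequiv : ∀ x n, f (x + intVec n) = f x + realMat A *ᵥ intVec n) :
    ∃ C, ∀ y, ‖f y - realMat A *ᵥ y‖ ≤ C :=
  exists_forall_norm_le_of_periodic
    (hf.sub (realMat A).mulVecLin.continuous_of_finiteDimensional)
    fun x n => by rw [hequiv, mulVec_add]; abel

theorem IsFranksMap.add_intVec (hβ : IsFranksMap (realMat A) f β) (hA : IsUnit (realMat A).det)
    (hequiv : ∀ x n, f (x + intVec n) = f x + realMat A *ᵥ intVec n) (x : Fin b → ℝ)
    (n : Fin b → ℤ) : β (x + intVec n) = β x + intVec n := by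
  refine tendsto_nhds_unique (hβ (x + intVec n)) ?_
  have happrox : ∀ k, franksApprox (realMat A) f k (x + intVec n)
      = franksApprox (realMat A) f k x + intVec n := fun k => by
    rw [franksApprox, franksApprox, iterate_add_intVec hequiv, mulVec_add, mulVec_mulVec,
      inv_pow', nonsing_inv_mul _ (by rw [det_pow]; exact hA.pow k), one_mulVec]
  simpa only [happrox] using (hβ x).add_const (intVec n)

end Lattice

section Embedding

open Topology

theorem isProperMap_of_dist_le {X : Type*} [MetricSpace X] [ProperSpace X] {g : X → X}
    (hg : Continuous g) {K : ℝ} (hK : ∀ x, dist x (g x) ≤ K) : IsProperMap g := by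
  refine isProperMap_iff_isCompact_preimage.mpr ⟨hg, fun s hs => ?_⟩
  refine Metric.isCompact_of_isClosed_isBounded (hs.isClosed.preimage hg)
    (hs.isBounded.cthickening (δ := K) |>.subset fun x hx => ?_)
  exact Metric.mem_cthickening_of_dist_le x (g x) K s hx (hK x)

theorem Topology.IsInducing.mem_nhds_iff_dist {X Y : Type*} [TopologicalSpace X]
    [PseudoMetricSpace Y] {g : X → Y} (hg : IsInducing g) {x : X} {s : Set X} :
    s ∈ 𝓝 x ↔ ∃ ε > 0, {y | dist (g x) (g y) < ε} ⊆ s := by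
  rw [hg.nhds_eq_comap, (Metric.nhds_basis_ball.comap g).mem_iff]
  simp only [Set.preimage, Metric.mem_ball, dist_comm]

end Embedding

section ExpandingMetric

open Topology

theorem pow_mul_le_iterate {X : Type*} {d : X → X → ℝ} {f : X → X} {c : ℝ} (hc : 0 ≤ c)
    (hf : ∀ x y, c * d x y ≤ d (f x) (f y)) (i : ℕ) (x y : X) :
    c ^ i * d x y ≤ d (f^[i] x) (f^[i] y) := by
  induction i with
  | zero => simp
  | succ i ih =>
    rw [Function.iterate_succ_apply', Function.iterate_succ_apply', pow_succ', mul_assoc]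
    exact (mul_le_mul_of_nonneg_left ih hc).trans (hf _ _)

theorem continuous_of_ball_mem_nhds {X : Type*} [TopologicalSpace X] {d : X → X → ℝ}
    (hsymm : ∀ x y, d x y = d y x) (htri : ∀ x y z, d x z ≤ d x y + d y z)
    (hball : ∀ y, ∀ ε > 0, {z | d y z < ε} ∈ 𝓝 y) (x : X) : Continuous (d x) := by
  refine continuous_iff_continuousAt.mpr fun y => Metric.tendsto_nhds.mpr fun ε hε => ?_
  filter_upwards [hball y ε hε] with z hz
  rw [Real.dist_eq, abs_sub_lt_iff]
  have := htri x y z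
  have := htri x z y
  have := hsymm z y
  constructor <;> linarith

variable {b : ℕ} {d : (Fin b → ℝ) → (Fin b → ℝ) → ℝ}

theorem exists_forall_le_of_norm_sub_le (hsymm : ∀ x y, d x y = d y x)
    (htri : ∀ x y z, d x z ≤ d x y + d y z) (hball : ∀ y, ∀ ε > 0, {z | d y z < ε} ∈ 𝓝 y)
    (hper : ∀ x y n, d (x + intVec n) (y + intVec n) = d x y) (K : ℝ) :
    ∃ C, ∀ u v, ‖u - v‖ ≤ K → d u v ≤ C := by
  obtain ⟨C, hC⟩ := (isCompact_closedBall (0 : Fin b → ℝ) (K + 1)).exists_bound_of_continuousOn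
    (continuous_of_ball_mem_nhds hsymm htri hball 0).continuousOn
  refine ⟨2 * C, fun u v huv => ?_⟩
  obtain ⟨n, hn⟩ := exists_add_intVec_mem_closedBall u
  rw [mem_closedBall_zero_iff] at hn
  have hu : ‖u + intVec n‖ ≤ K + 1 := by linarith [norm_nonneg (u - v)]
  have hv : ‖v + intVec n‖ ≤ K + 1 := by
    calc ‖v + intVec n‖ = ‖(u + intVec n) - (u - v)‖ := by congr 1; abel
      _ ≤ ‖u + intVec n‖ + ‖u - v‖ := norm_sub_le _ _
      _ ≤ K + 1 := by linarith
  have hCu := hC (u + intVec n) (mem_closedBall_zero_iff.mpr hu)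
  have hCv := hC (v + intVec n) (mem_closedBall_zero_iff.mpr hv)
  rw [Real.norm_eq_abs] at hCu hCv
  calc d u v = d (u + intVec n) (v + intVec n) := (hper u v n).symm
    _ ≤ d 0 (u + intVec n) + d 0 (v + intVec n) := by
      rw [hsymm 0]; exact htri _ 0 _
    _ ≤ 2 * C := by linarith [le_abs_self (d 0 (u + intVec n)), le_abs_self (d 0 (v + intVec n))]

theorem eq_of_forall_norm_iterate_sub_le {f : (Fin b → ℝ) → Fin b → ℝ} {lam' : ℝ}
    (hlam' : 1 < lam') (hzero : ∀ x y, d x y = 0 ↔ x = y) (hsymm : ∀ x y, d x y = d y x)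
    (htri : ∀ x y z, d x z ≤ d x y + d y z) (hball : ∀ y, ∀ ε > 0, {z | d y z < ε} ∈ 𝓝 y)
    (hper : ∀ x y n, d (x + intVec n) (y + intVec n) = d x y)
    (hexp : ∀ x y, lam' * d x y ≤ d (f x) (f y)) {x x' : Fin b → ℝ} {K : ℝ}
    (hK : ∀ i, ‖f^[i] x - f^[i] x'‖ ≤ K) : x = x' := by
  obtain ⟨C, hC⟩ := exists_forall_le_of_norm_sub_le hsymm htri hball hper K
  have hgrow : ∀ i, lam' ^ i * d x x' ≤ C := fun i =>
    (pow_mul_le_iterate (by linarith) hexp i x x').trans (hC _ _ (hK i))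
  have hnonneg : 0 ≤ d x x' := by
    linarith [htri x x' x, hsymm x' x, (hzero x x).mpr rfl]
  refine (hzero x x').mp (hnonneg.eq_or_lt.resolve_right fun hpos => ?_).symm
  obtain ⟨i, hi⟩ := pow_unbounded_of_one_lt (C / d x x') hlam'
  rw [div_lt_iff₀ hpos] at hi
  linarith [hgrow i]

end ExpandingMetric

theorem dist_iterate_le_of_semiconj {X : Type*} [PseudoMetricSpace X] {f g β : X → X} {K : ℝ}
    (hβ : ∀ y, dist y (β y) ≤ K) (hsc : Function.Semiconj β f g) {x x' : X} (h : β x = β x')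
    (i : ℕ) : dist (f^[i] x) (f^[i] x') ≤ 2 * K := by
  have hβi : β (f^[i] x) = β (f^[i] x') := by
    rw [(hsc.iterate_right i) x, (hsc.iterate_right i) x', h]
  calc dist (f^[i] x) (f^[i] x') ≤ dist (f^[i] x) (β (f^[i] x)) + dist (f^[i] x') (β (f^[i] x)) :=
        dist_triangle_right _ _ _
    _ ≤ 2 * K := by linarith [hβ (f^[i] x), hβi ▸ hβ (f^[i] x')]

theorem stmt17_general (b : ℕ) (A : Matrix (Fin b) (Fin b) ℤ)
    (f : (Fin b → ℝ) → (Fin b → ℝ)) (hcont : Continuous f)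
    (hequiv : ∀ (x : Fin b → ℝ) (n : Fin b → ℤ),
      f (x + intVec n) = f x + (realMat A).mulVec (intVec n))
    (lam : ℝ) (hlam : 1 < lam) (hA : (realMat A).det ≠ 0)
    (hexp : ∀ v : Fin b → ℝ, lam * ‖v‖ ≤ ‖(realMat A).mulVec v‖)
    (β : (Fin b → ℝ) → (Fin b → ℝ))
    (hβ : ∀ x : Fin b → ℝ, Tendsto (fun n : ℕ => ((realMat A)⁻¹ ^ n).mulVec (f^[n] x))
      atTop (nhds (β x))) :
    List.TFAE [
      Function.Injective β,
      ∃ (d : (Fin b → ℝ) → (Fin b → ℝ) → ℝ) (lam' : ℝ), 1 < lam' ∧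
        (∀ x y, d x y = 0 ↔ x = y) ∧
        (∀ x y, d x y = d y x) ∧
        (∀ x y z, d x z ≤ d x y + d y z) ∧
        (∀ (x y : Fin b → ℝ) (n : Fin b → ℤ), d (x + intVec n) (y + intVec n) = d x y) ∧
        (∀ (x : Fin b → ℝ) (s : Set (Fin b → ℝ)),
          s ∈ nhds x ↔ ∃ ε > 0, {y | d x y < ε} ⊆ s) ∧
        (∀ x y, lam' * d x y ≤ d (f x) (f y)),
      ∀ x x' : Fin b → ℝ, (∃ K : ℝ, ∀ i : ℕ, ‖f^[i] x - f^[i] x'‖ ≤ K) → x = x'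
    ] := by
  have hM : IsUnit (realMat A).det := hA.isUnit
  have hfranks : IsFranksMap (realMat A) f β := hβ
  have hr₀ : 0 ≤ lam⁻¹ := by positivity
  have hr : lam⁻¹ < 1 := inv_lt_one_of_one_lt₀ hlam
  have hcontr := norm_inv_pow_mulVec_le hM (by positivity) hexp
  obtain ⟨C, hdisp⟩ := exists_forall_norm_sub_mulVec_le hcont hequiv
  have hnear := hfranks.dist_le hM hr₀ hr hcontr hdisp
  have hβcont := hfranks.continuous hcont hM hr₀ hr hcontr hdisp
  tfae_have 1 → 2 := fun hinj => by
    have hemb := Topology.IsClosedEmbedding.of_continuous_injective_isClosedMap hβcont hinj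
      (isProperMap_of_dist_le hβcont hnear).isClosedMap
    refine ⟨fun x y => ‖β x - β y‖, lam, hlam, fun x y => ?_, fun x y => norm_sub_rev _ _,
      fun x y z => norm_sub_le_norm_sub_add_norm_sub _ _ _, fun x y n => ?_, fun x s => ?_,
      fun x y => ?_⟩
    · rw [norm_sub_eq_zero_iff, hinj.eq_iff]
    · simp only [hfranks.add_intVec hM hequiv, add_sub_add_right_eq_sub]
    · simpa only [dist_eq_norm] using hemb.isInducing.mem_nhds_iff_dist
    · simpa only [hfranks.semiconj hM x, hfranks.semiconj hM y, mulVec_sub] using hexp (β x - β y)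
  tfae_have 2 → 3 := by
    rintro ⟨d, lam', hlam', hzero, hsymm, htri, hper, htop, hexp'⟩ x x' ⟨K, hK⟩
    exact eq_of_forall_norm_iterate_sub_le hlam' hzero hsymm htri
      (fun y ε hε => (htop y _).mpr ⟨ε, hε, subset_rfl⟩) hper hexp' hK
  tfae_have 3 → 1 := fun hshadow x x' hxx' => hshadow x x' ⟨2 * (C * lam⁻¹ / (1 - lam⁻¹)),
    fun i => by simpa only [dist_eq_norm] using
      dist_iterate_le_of_semiconj hnear (hfranks.semiconj hM) hxx' i⟩
  tfae_finish

/-- For an `H₁`-expanding situation the following are equivalent: (a) the Franks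
map `β̃` is injective; (b) there is a `ℤ^b`-equivariant metric on `ℝ^b` inducing the standard
topology in which `f̃` expands by a factor `λ' > 1`; (c) no two distinct points shadow under
`f̃`. -/
theorem stmt17 (b : ℕ) (hb : 1 ≤ b) (A : Matrix (Fin b) (Fin b) ℤ)
    (f : (Fin b → ℝ) → (Fin b → ℝ)) (hcont : Continuous f)
    (hequiv : ∀ (x : Fin b → ℝ) (n : Fin b → ℤ),
      f (x + intVec n) = f x + (realMat A).mulVec (intVec n))
    (lam : ℝ) (hlam : 1 < lam) (hA : (realMat A).det ≠ 0)
    (hexp : ∀ v : Fin b → ℝ, lam * ‖v‖ ≤ ‖(realMat A).mulVec v‖)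
    (β : (Fin b → ℝ) → (Fin b → ℝ))
    (hβ : ∀ x : Fin b → ℝ, Tendsto (fun n : ℕ => ((realMat A)⁻¹ ^ n).mulVec (f^[n] x))
      atTop (nhds (β x))) :
    List.TFAE [
      Function.Injective β,
      ∃ (d : (Fin b → ℝ) → (Fin b → ℝ) → ℝ) (lam' : ℝ), 1 < lam' ∧
        (∀ x y, d x y = 0 ↔ x = y) ∧
        (∀ x y, d x y = d y x) ∧
        (∀ x y z, d x z ≤ d x y + d y z) ∧
        (∀ (x y : Fin b → ℝ) (n : Fin b → ℤ), d (x + intVec n) (y + intVec n) = d x y) ∧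
        (∀ (x : Fin b → ℝ) (s : Set (Fin b → ℝ)),
          s ∈ nhds x ↔ ∃ ε > 0, {y | d x y < ε} ⊆ s) ∧
        (∀ x y, lam' * d x y ≤ d (f x) (f y)),
      ∀ x x' : Fin b → ℝ, (∃ K : ℝ, ∀ i : ℕ, ‖f^[i] x - f^[i] x'‖ ≤ K) → x = x'
    ] :=
  stmt17_general b A f hcont hequiv lam hlam hA hexp β hβ
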